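/- For all nonnegative integers n, p and real x, λ, the truncated degenerate modified Bell polynomial satisfies B^{(p)}_{n,λ}(x) = Σ_{k=0}^{n} S_{2,λ}(n, k | x) / C(k+p, p). -/

import Mathlib

open Finset

def degFall (l x : ℝ) (n : ℕ) : ℝ := ∏ i ∈ Finset.range n, (x - i * l)

def fall (x : ℝ) (n : ℕ) : ℝ := ∏ i ∈ Finset.range n, (x - i)

/-- The degenerate exponential `e_λ^x(t)` as a formal power series over ℝ. -/
noncomputable def degExpPS (l x : ℝ) : PowerSeries ℝ :=
  PowerSeries.mk fun n => degFall l x n / (n.factorial : ℝ)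

/-! Since `e_λ^{j + x}(t) = e_λ(t)^j e_λ^x(t) = ∑ₖ C(j, k) (e_λ(t) - 1)^k e_λ^x(t)`, comparing
coefficients of `t^m` gives `(j + x)_{m,λ} = ∑ₖ S(m, k) (j)_k` for every natural `j`, where
`S(m, k) = m!/k! [t^m] (e_λ(t) - 1)^k e_λ^x(t)`. At natural arguments the falling factorials
`(j)_k = k! C(j, k)` form a triangular system, so `S2x m k = S(m, k)`. As `(e_λ(t) - 1)^k` is
divisible by `t^k`, only `k ≤ n` contribute to `B^{(p)}_{n,λ}(x)`, and
`n! p!/(k + p)! [t^n] (e_λ(t) - 1)^k e_λ^x(t) = S(n, k) / C(k + p, p)`. -/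

open PowerSeries

lemma degFall_succ (l a : ℝ) (n : ℕ) :
    degFall l a (n + 1) = degFall l a n * (a - n * l) :=
  prod_range_succ _ _

lemma degFall_add (l a b : ℝ) (n : ℕ) :
    degFall l (a + b) n =
      ∑ ij ∈ antidiagonal n, (n.choose ij.1 : ℝ) * (degFall l a ij.1 * degFall l b ij.2) := by
  induction n with
  | zero => simp [degFall]
  | succ n ih =>
    rw [sum_antidiagonal_choose_succ_mul (fun i j => degFall l a i * degFall l b j),
      ← sum_add_distrib, degFall_succ, ih, sum_mul]
    refine sum_congr rfl fun ij hij => ?_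
    obtain rfl : ij.1 + ij.2 = n := mem_antidiagonal.mp hij
    rw [Nat.choose_symm_add, degFall_succ, degFall_succ]
    push_cast
    ring

lemma coeff_degExpPS (l a : ℝ) (m : ℕ) :
    coeff m (degExpPS l a) = degFall l a m / m.factorial :=
  coeff_mk _ _

lemma constantCoeff_degExpPS (l a : ℝ) : constantCoeff (degExpPS l a) = 1 := by
  simp [degExpPS, degFall]

lemma degExpPS_add (l a b : ℝ) : degExpPS l (a + b) = degExpPS l a * degExpPS l b := by
  ext m
  rw [coeff_mul, coeff_degExpPS, degFall_add, sum_div]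
  refine sum_congr rfl fun ij hij => ?_
  obtain rfl : ij.1 + ij.2 = m := mem_antidiagonal.mp hij
  rw [coeff_degExpPS, coeff_degExpPS, ← Nat.add_choose_mul_factorial_mul_factorial,
    Nat.choose_symm_add]
  have := (Nat.choose_pos (Nat.le_add_left ij.2 ij.1)).ne'
  push_cast
  field_simp

lemma degExpPS_natCast_add (l x : ℝ) (N : ℕ) :
    degExpPS l (N + x) = degExpPS l 1 ^ N * degExpPS l x := by
  induction N with
  | zero => simp [degExpPS, degFall]
  | succ N ih => rw [Nat.cast_succ, add_comm (N : ℝ), add_assoc, degExpPS_add, ih, pow_succ']; ring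

lemma PowerSeries.coeff_pow_mul_eq_zero_of_lt {R : Type*} [CommSemiring R] {f : R⟦X⟧}
    (hf : constantCoeff f = 0) (g : R⟦X⟧) {m k : ℕ} (h : m < k) :
    coeff m (f ^ k * g) = 0 :=
  X_pow_dvd_iff.mp ((pow_dvd_pow_of_dvd (X_dvd_iff.mpr hf) k).mul_right g) m h

lemma coeff_degExpPS_sub_one_pow_mul_eq_zero (l x : ℝ) {m k : ℕ} (h : m < k) :
    coeff m ((degExpPS l 1 - 1) ^ k * degExpPS l x) = 0 :=
  coeff_pow_mul_eq_zero_of_lt (by simp [constantCoeff_degExpPS]) _ h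

lemma fall_natCast (j k : ℕ) : fall j k = k.factorial * j.choose k := by
  rw [fall, ← descPochhammer_eval_eq_prod_range, descPochhammer_eval_eq_descFactorial,
    Nat.descFactorial_eq_factorial_mul_choose, Nat.cast_mul]

lemma fall_natCast_self (k : ℕ) : fall k k = k.factorial := by
  simp [fall_natCast]

lemma fall_natCast_eq_zero_of_lt {j k : ℕ} (h : j < k) : fall j k = 0 := by
  simp [fall_natCast, Nat.choose_eq_zero_of_lt h]

lemma eq_zero_of_sum_mul_fall_natCast_eq_zero {m : ℕ} {d : ℕ → ℝ}
    (h : ∀ j ≤ m, ∑ k ∈ range (m + 1), d k * fall j k = 0) : ∀ k ≤ m, d k = 0 := by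
  intro k
  induction k using Nat.strong_induction_on with
  | _ k ih =>
    intro hk
    have hsum := h k hk
    rw [sum_eq_single_of_mem k (mem_range_succ_iff.mpr hk) fun i _ hik => ?_,
      fall_natCast_self] at hsum
    · exact (mul_eq_zero.mp hsum).resolve_right (Nat.cast_ne_zero.mpr k.factorial_ne_zero)
    · rcases hik.lt_or_gt with hlt | hgt
      · rw [ih i hlt (hlt.le.trans hk), zero_mul]
      · rw [fall_natCast_eq_zero_of_lt hgt, mul_zero]

/-- `S_{2,λ}(m, k | x)` through its generating function:
`(e_λ(t) - 1)^k / k! · e_λ^x(t) = ∑ₘ S_{2,λ}(m, k | x) t^m / m!`. -/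
noncomputable def degStirling2 (l x : ℝ) (m k : ℕ) : ℝ :=
  m.factorial / k.factorial * coeff m ((degExpPS l 1 - 1) ^ k * degExpPS l x)

lemma degFall_natCast_add (l x : ℝ) (j m : ℕ) :
    degFall l (j + x) m = ∑ k ∈ range (m + 1), degStirling2 l x m k * fall j k := by
  set c : ℕ → ℝ := fun k => coeff m ((degExpPS l 1 - 1) ^ k * degExpPS l x)
  have hterm (k : ℕ) : degStirling2 l x m k * fall j k = m.factorial * (c k * j.choose k) := by
    rw [degStirling2, fall_natCast]
    field_simp
    exact mul_comm _ _
  have hc : ∀ k ≥ m + 1, c k * j.choose k = 0 := fun k hk => by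
    simp [c, coeff_degExpPS_sub_one_pow_mul_eq_zero l x (Nat.lt_of_succ_le hk)]
  have hchoose : ∀ k ≥ j + 1, c k * j.choose k = 0 := fun k hk => by
    simp [Nat.choose_eq_zero_of_lt (Nat.lt_of_succ_le hk)]
  have hdegFall : degFall l (j + x) m = m.factorial * coeff m (degExpPS l (j + x)) := by
    rw [coeff_degExpPS]
    field_simp
  have hpow := add_pow (degExpPS l 1 - 1) 1 j
  simp only [sub_add_cancel, one_pow, mul_one, ← map_natCast (C (R := ℝ))] at hpow
  rw [sum_congr rfl fun k _ => hterm k, ← mul_sum, hdegFall, degExpPS_natCast_add, hpow, sum_mul,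
    map_sum, ← eventually_constant_sum hc (by omega : m + 1 ≤ j + m + 1),
    eventually_constant_sum hchoose (by omega : j + 1 ≤ j + m + 1)]
  congr 2 with k
  rw [mul_right_comm, coeff_mul_C]

lemma eq_degStirling2_of_degFall_natCast_add_eq {l x : ℝ} {m : ℕ} {S : ℕ → ℝ}
    (hS : ∀ j : ℕ, degFall l (j + x) m = ∑ k ∈ range (m + 1), S k * fall j k) :
    ∀ k ≤ m, S k = degStirling2 l x m k := by
  have hdiff := eq_zero_of_sum_mul_fall_natCast_eq_zero (d := fun k => S k - degStirling2 l x m k)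
    fun j _ => by
      rw [sum_congr rfl fun k _ => sub_mul .., sum_sub_distrib, ← hS, ← degFall_natCast_add,
        sub_self]
  exact fun k hk => sub_eq_zero.mp (hdiff k hk)

theorem truncated_degenerate_modified_Bell_explicit
    (l x : ℝ) (n p : ℕ)
    (S2x : ℕ → ℕ → ℝ)
    (hSx : ∀ (y : ℝ) (m : ℕ),
      degFall l (y + x) m = ∑ k ∈ Finset.range (m + 1), S2x m k * fall y k)
    (B : ℕ → ℝ)
    (hB : ∀ m : ℕ,
      (∑' k : ℕ, (p.factorial : ℝ) / ((k + p).factorial : ℝ) *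
        PowerSeries.coeff m (((degExpPS l 1 - 1) ^ k) * degExpPS l x))
        = B m / (m.factorial : ℝ)) :
    B n = ∑ k ∈ Finset.range (n + 1), S2x n k / (((k + p).choose p : ℕ) : ℝ) := by
  have hvanish : ∀ k ∉ range (n + 1), (p.factorial : ℝ) / (k + p).factorial *
      coeff n ((degExpPS l 1 - 1) ^ k * degExpPS l x) = 0 := fun k hk => by
    rw [coeff_degExpPS_sub_one_pow_mul_eq_zero l x (by simpa using hk), mul_zero]
  have hBn : B n = n.factorial * ∑ k ∈ range (n + 1), (p.factorial : ℝ) / (k + p).factorial *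
      coeff n ((degExpPS l 1 - 1) ^ k * degExpPS l x) := by
    rw [← tsum_eq_sum (L := .unconditional ℕ) hvanish, hB n]
    field_simp
  rw [hBn, mul_sum]
  refine sum_congr rfl fun k hk => ?_
  rw [eq_degStirling2_of_degFall_natCast_add_eq (fun j => hSx j n) k (mem_range_succ_iff.mp hk),
    degStirling2, ← Nat.add_choose_mul_factorial_mul_factorial]
  have := (Nat.choose_pos (Nat.le_add_left p k)).ne'
  push_cast
  field_simp
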